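/- Let R be a commutative ring, s a ring automorphism of R with s∘s = id, and A = R^s its fixed subring; assume there exists x ∈ R with s(x) = −x such that {1, x} is a basis of R as an A-module. For an R-module M let F(M) = M ⊗_A R, regarded as an R-module via the right tensor factor (M being an A-module by restriction). Then the endofunctor F of the category of R-modules is self-adjoint: there are isomorphisms Hom_R(F(M), N) ≅ Hom_R(M, F(N)) natural in the R-modules M and N. -/

import Mathlib

/-!
Let `R` be a commutative ring, `s` an involutive ring automorphism with fixed subring `A = R^s`,
and suppose `R = A ⊕ xA` for an element `x` with `s x = -x`.  For an `R`-module `M` let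
`F(M) = M ⊗_A R`, regarded as an `R`-module via the right tensor factor (`M` being an `A`-module
by restriction).  Then the endofunctor `F` of the category of `R`-modules is self-adjoint:
there are isomorphisms `Hom_R(F(M), N) ≅ Hom_R(M, F(N))` natural in `M` and `N`.
-/

open scoped TensorProduct

noncomputable section

section FDef

variable (A : Type) [CommRing A] (R : Type) [CommRing R] [Algebra A R]
variable (M : Type) [AddCommGroup M] [Module A M]

/-- The underlying abelian group of `F(M) = M ⊗_A R`. -/
def FObj : Type := TensorProduct A M R

instance : AddCommGroup (FObj A R M) :=
  inferInstanceAs (AddCommGroup (TensorProduct A M R))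

instance : Module A (FObj A R M) :=
  inferInstanceAs (Module A (TensorProduct A M R))

/-- The `R`-action on `F(M) = M ⊗_A R` through the right tensor factor. -/
instance : SMul R (FObj A R M) :=
  ⟨fun r z =>
    (LinearMap.lTensor M (LinearMap.mulLeft A r) :
      TensorProduct A M R →ₗ[A] TensorProduct A M R) z⟩

/-- `F(M) = M ⊗_A R` is an `R`-module via the right tensor factor. -/
instance : Module R (FObj A R M) :=
  Module.ofMinimalAxioms
    (fun r z w => map_add (LinearMap.lTensor M (LinearMap.mulLeft A r)) z w)
    (fun r r' z => by
      show LinearMap.lTensor M (LinearMap.mulLeft A (r + r')) z = _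
      have h : LinearMap.mulLeft A (r + r') =
          LinearMap.mulLeft A r + LinearMap.mulLeft A r' := by
        ext t; simp [add_mul]
      rw [h, LinearMap.lTensor_add]; rfl)
    (fun r r' z => by
      show LinearMap.lTensor M (LinearMap.mulLeft A (r * r')) z = _
      have h : LinearMap.mulLeft A (r * r') =
          (LinearMap.mulLeft A r).comp (LinearMap.mulLeft A r') := by
        ext t; simp [mul_assoc]
      rw [h, LinearMap.lTensor_comp]; rfl)
    (fun z => by
      show LinearMap.lTensor M (LinearMap.mulLeft A (1 : R)) z = z
      rw [LinearMap.mulLeft_one, LinearMap.lTensor_id]; rfl)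

variable {A R}

/-- `F` on morphisms: `F(f) = f ⊗ id_R : M ⊗_A R → N ⊗_A R`. -/
def Fmap {M N : Type} [AddCommGroup M] [Module A M] [Module R M] [IsScalarTower A R M]
    [AddCommGroup N] [Module A N] [Module R N] [IsScalarTower A R N]
    (f : M →ₗ[R] N) : FObj A R M →ₗ[R] FObj A R N where
  toFun z :=
    (LinearMap.rTensor R (f.restrictScalars A) :
      TensorProduct A M R →ₗ[A] TensorProduct A N R) z
  map_add' z w := map_add _ z w
  map_smul' r z := by
    show LinearMap.rTensor R (f.restrictScalars A)
        (LinearMap.lTensor M (LinearMap.mulLeft A r) z)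
      = LinearMap.lTensor N (LinearMap.mulLeft A r)
        (LinearMap.rTensor R (f.restrictScalars A) z)
    exact LinearMap.congr_fun ((LinearMap.rTensor_comp_lTensor (f := f.restrictScalars A)
      (g := LinearMap.mulLeft A r)).trans (LinearMap.lTensor_comp_rTensor
      (f := f.restrictScalars A) (g := LinearMap.mulLeft A r)).symm) z

end FDef

/-!
`R` is a free `A`-module with basis `{1, x}`, and the `x`-coordinate `τ : R → A` is a Frobenius
form. Hence `F(M) = M ⊗_A R` is at the same time the module induced and the module coinduced from
the `A`-module `M`: `Hom_R(F M, N) ≅ Hom_A(M, N)` by extension of scalars, and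
`Hom_R(M, F N) ≅ Hom_A(M, N)` by `θ ↦ (id ⊗ τ) ∘ θ`, whose inverse is written with the basis of `R`
dual to `{1, x}` under `τ`. Both isomorphisms are natural, and so is their composite.
-/

section

variable {A R : Type} [CommRing A] [CommRing R] [Algebra A R]

theorem map_smul_of_map_x_smul {x : R}
    (hspan : ∀ r : R, ∃ ab : A × A, r = algebraMap A R ab.1 + x * algebraMap A R ab.2)
    {M N : Type} [AddCommGroup M] [Module A M] [Module R M] [IsScalarTower A R M]
    [AddCommGroup N] [Module A N] [Module R N] [IsScalarTower A R N]
    (f : M →ₗ[A] N) (hf : ∀ m, f (x • m) = x • f m) (r : R) (m : M) : f (r • m) = r • f m := by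
  obtain ⟨⟨a, b⟩, rfl⟩ := hspan r
  simp only [add_smul, mul_smul, algebraMap_smul, map_add, map_smul, hf]

variable {x : R} (hb : ∀ r : R, ∃! ab : A × A, r = algebraMap A R ab.1 + x * algebraMap A R ab.2)

def basisOneX : (A × A) ≃ₗ[A] R :=
  LinearEquiv.ofBijective
    ((LinearMap.toSpanSingleton A R 1).coprod (LinearMap.toSpanSingleton A R x))
    ((Function.bijective_iff_existsUnique _).2 fun r => by
      simpa [eq_comm, Algebra.smul_def, mul_comm] using hb r)

theorem basisOneX_apply (p : A × A) : basisOneX hb p = p.1 • 1 + p.2 • x := rfl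

def xCoord : R →ₗ[A] A := LinearMap.snd A A A ∘ₗ (basisOneX hb).symm.toLinearMap

theorem fst_smul_one_add_xCoord_smul (r : R) :
    ((basisOneX hb).symm r).1 • (1 : R) + xCoord hb r • x = r :=
  (basisOneX hb).apply_symm_apply r

theorem xCoord_algebraMap (a : A) : xCoord hb (algebraMap A R a) = 0 := by
  have : (basisOneX hb).symm (algebraMap A R a) = (a, 0) :=
    (basisOneX hb).symm_apply_eq.2 (by simp [basisOneX_apply, Algebra.algebraMap_eq_smul_one])
  simp [xCoord, this]

theorem xCoord_one : xCoord hb 1 = 0 := by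
  simpa using xCoord_algebraMap hb 1

theorem xCoord_x : xCoord hb x = 1 := by
  have : (basisOneX hb).symm x = (0, 1) :=
    (basisOneX hb).symm_apply_eq.2 (by simp [basisOneX_apply])
  simp [xCoord, this]

/-- Writing `x * x = c + d x`, the basis `{x - d, 1}` is dual to `{1, x}` under the pairing
`(r, r') ↦ xCoord (r * r')`. -/
def dualX : R := x - algebraMap A R (xCoord hb (x * x))

theorem dualX_mul_x : dualX hb * x = algebraMap A R ((basisOneX hb).symm (x * x)).1 := by
  have h := fst_smul_one_add_xCoord_smul hb (x * x)
  rw [Algebra.smul_def, Algebra.smul_def, mul_one] at h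
  rw [dualX]
  linear_combination -h

theorem xCoord_dualX_mul (r : R) : xCoord hb (dualX hb * r) = ((basisOneX hb).symm r).1 := by
  set a := ((basisOneX hb).symm r).1
  set b := xCoord hb r
  have h : dualX hb * r = a • dualX hb + algebraMap A R (b * ((basisOneX hb).symm (x * x)).1) := by
    have hr := fst_smul_one_add_xCoord_smul hb r
    rw [Algebra.smul_def, Algebra.smul_def, mul_one] at hr
    rw [Algebra.smul_def, map_mul, ← dualX_mul_x]
    linear_combination (dualX hb) * hr.symm
  rw [h, map_add, map_smul, xCoord_algebraMap, dualX, map_sub, xCoord_x, xCoord_algebraMap]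
  simp

theorem xCoord_dualX_mul_smul_one_add (r : R) :
    xCoord hb (dualX hb * r) • (1 : R) + xCoord hb r • x = r := by
  rw [xCoord_dualX_mul, fst_smul_one_add_xCoord_smul]

namespace FObj

section Induced

variable {M : Type} [AddCommGroup M] [Module A M]

variable (A) in
def mk : M →ₗ[A] R →ₗ[A] FObj A R M := TensorProduct.mk A M R

@[elab_as_elim]
theorem induction_on {motive : FObj A R M → Prop} (z : FObj A R M) (zero : motive 0)
    (mk : ∀ m t, motive (mk A m t)) (add : ∀ z w, motive z → motive w → motive (z + w)) :
    motive z :=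
  TensorProduct.induction_on (motive := motive) z zero mk add

theorem smul_mk (r : R) (m : M) (t : R) : r • mk A m t = mk A m (r * t) := rfl

theorem mk_eq_smul_mk_one (m : M) (t : R) : mk A m t = t • mk A m 1 := by
  rw [smul_mk, mul_one]

instance : IsScalarTower A R (FObj A R M) where
  smul_assoc a r z := by
    induction z using FObj.induction_on with
    | zero => simp only [smul_zero]
    | mk m t => rw [smul_mk, smul_mk, smul_mul_assoc, map_smul]
    | add z w hz hw => rw [smul_add, smul_add, smul_add, hz, hw]

@[ext]
theorem hom_ext {P : Type} [AddCommGroup P] [Module R P] {φ φ' : FObj A R M →ₗ[R] P}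
    (h : ∀ m, φ (mk A m 1) = φ' (mk A m 1)) : φ = φ' := by
  ext z
  induction z using FObj.induction_on with
  | zero => simp only [map_zero]
  | mk m t => rw [mk_eq_smul_mk_one, map_smul, map_smul, h]
  | add z w hz hw => rw [map_add, map_add, hz, hw]

variable {N : Type} [AddCommGroup N] [Module A N] [Module R N] [IsScalarTower A R N]

def lift (ψ : M →ₗ[A] N) : FObj A R M →ₗ[R] N where
  toFun := TensorProduct.lift ((Algebra.lsmul A A N).toLinearMap.flip ∘ₗ ψ)
  map_add' := map_add _
  map_smul' r z := by
    let L : FObj A R M →ₗ[A] N := TensorProduct.lift ((Algebra.lsmul A A N).toLinearMap.flip ∘ₗ ψ)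
    change L (r • z) = r • L z
    induction z using FObj.induction_on with
    | zero => simp only [smul_zero, map_zero]
    | mk m t => exact mul_smul r t (ψ m)
    | add z w hz hw => rw [smul_add, map_add, map_add, hz, hw, smul_add]

@[simp]
theorem lift_mk (ψ : M →ₗ[A] N) (m : M) (t : R) : lift ψ (mk A m t) = t • ψ m := rfl

def homEquiv : (FObj A R M →ₗ[R] N) ≃ (M →ₗ[A] N) where
  toFun φ := φ.restrictScalars A ∘ₗ (mk A).flip 1
  invFun := lift
  left_inv φ := by ext m; simp
  right_inv ψ := by ext m; simp

end Induced

section Coinduced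

variable {M N : Type} [AddCommGroup M] [Module A M] [Module R M] [IsScalarTower A R M]
  [AddCommGroup N] [Module A N]

def contractXCoord : FObj A R N →ₗ[A] N := TensorProduct.rid A N ∘ₗ (xCoord hb).lTensor N

@[simp]
theorem contractXCoord_mk (n : N) (t : R) : contractXCoord hb (mk A n t) = xCoord hb t • n := rfl

theorem mk_contractXCoord_dualX_smul_add (z : FObj A R N) :
    mk A (contractXCoord hb (dualX hb • z)) 1 + mk A (contractXCoord hb z) x = z := by
  induction z using FObj.induction_on with
  | zero => simp only [smul_zero, map_zero, LinearMap.zero_apply, add_zero]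
  | mk n t =>
    rw [smul_mk, contractXCoord_mk, contractXCoord_mk, map_smul, map_smul, LinearMap.smul_apply,
      LinearMap.smul_apply, ← map_smul, ← map_smul, ← map_add, xCoord_dualX_mul_smul_one_add]
  | add z w hz hw =>
    rw [smul_add, map_add, map_add, map_add, map_add, LinearMap.add_apply, LinearMap.add_apply]
    nth_rw 3 [← hz]; nth_rw 3 [← hw]
    abel

def coinduce (ψ : M →ₗ[A] N) : M →ₗ[R] FObj A R N :=
  let f : M →ₗ[A] FObj A R N :=
    (mk A).flip 1 ∘ₗ ψ ∘ₗ Algebra.lsmul A A M (dualX hb) + (mk A).flip x ∘ₗ ψ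
  { f with
    map_smul' := map_smul_of_map_x_smul (fun r => (hb r).exists) f fun m => by
      simp only [f, LinearMap.add_apply, LinearMap.comp_apply, Algebra.lsmul_coe,
        LinearMap.flip_apply]
      rw [smul_smul, dualX_mul_x, algebraMap_smul, map_smul, smul_add, smul_mk, smul_mk, mul_one,
        dualX, sub_smul, algebraMap_smul]
      set c := ((basisOneX hb).symm (x * x)).1
      set d := xCoord hb (x * x)
      have hxx : c • 1 + d • x = x * x := fst_smul_one_add_xCoord_smul hb (x * x)
      rw [← hxx]
      simp only [map_sub, map_smul, map_add, LinearMap.sub_apply, LinearMap.smul_apply]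
      abel }

@[simp]
theorem coinduce_apply (ψ : M →ₗ[A] N) (m : M) :
    coinduce hb ψ m = mk A (ψ (dualX hb • m)) 1 + mk A (ψ m) x := rfl

def coinduceEquiv : (M →ₗ[R] FObj A R N) ≃ (M →ₗ[A] N) where
  toFun θ := contractXCoord hb ∘ₗ θ.restrictScalars A
  invFun := coinduce hb
  left_inv θ := by
    ext m
    simp only [coinduce_apply, LinearMap.comp_apply, LinearMap.restrictScalars_apply, map_smul]
    exact mk_contractXCoord_dualX_smul_add hb (θ m)
  right_inv ψ := by
    ext m
    simp [xCoord_one, xCoord_x]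

end Coinduced

section Naturality

variable {M N M' N' : Type}
  [AddCommGroup M] [Module A M] [Module R M] [IsScalarTower A R M]
  [AddCommGroup N] [Module A N] [Module R N] [IsScalarTower A R N]
  [AddCommGroup M'] [Module A M'] [Module R M'] [IsScalarTower A R M']
  [AddCommGroup N'] [Module A N'] [Module R N'] [IsScalarTower A R N']
  (f : M' →ₗ[R] M) (g : N →ₗ[R] N')

@[simp]
theorem Fmap_mk (m : M') (t : R) : Fmap f (mk A m t) = mk A (f m) t := rfl

theorem homEquiv_naturality (φ : FObj A R M →ₗ[R] N) :
    homEquiv (g ∘ₗ φ ∘ₗ Fmap f) = g.restrictScalars A ∘ₗ homEquiv φ ∘ₗ f.restrictScalars A := by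
  ext m
  simp [homEquiv]

theorem contractXCoord_Fmap (z : FObj A R N) :
    contractXCoord hb (Fmap g z) = g (contractXCoord hb z) := by
  induction z using FObj.induction_on with
  | zero => simp only [map_zero]
  | mk n t => simp
  | add z w hz hw => rw [map_add, map_add, map_add, hz, hw, map_add]

theorem coinduceEquiv_naturality (θ : M →ₗ[R] FObj A R N) :
    coinduceEquiv hb (Fmap g ∘ₗ θ ∘ₗ f) =
      g.restrictScalars A ∘ₗ coinduceEquiv hb θ ∘ₗ f.restrictScalars A := by
  ext m
  simp [coinduceEquiv, contractXCoord_Fmap]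

end Naturality

end FObj

end

theorem tensor_fixedSubring_self_adjoint
    (R : Type) [CommRing R]
    (A : Type) [CommRing A] [Algebra A R]
    (x : R)
    (hbasis : ∀ r : R, ∃! ab : A × A,
      r = algebraMap A R ab.1 + x * algebraMap A R ab.2) :
    ∃ e : ∀ (M : Type) [AddCommGroup M] [Module A M] [Module R M] [IsScalarTower A R M]
        (N : Type) [AddCommGroup N] [Module A N] [Module R N] [IsScalarTower A R N],
        (FObj A R M →ₗ[R] N) ≃ (M →ₗ[R] FObj A R N),
      ∀ (M M' N N' : Type)
        [AddCommGroup M] [Module A M] [Module R M] [IsScalarTower A R M]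
        [AddCommGroup M'] [Module A M'] [Module R M'] [IsScalarTower A R M']
        [AddCommGroup N] [Module A N] [Module R N] [IsScalarTower A R N]
        [AddCommGroup N'] [Module A N'] [Module R N'] [IsScalarTower A R N']
        (f : M' →ₗ[R] M) (g : N →ₗ[R] N')
        (φ : FObj A R M →ₗ[R] N),
        e M' N' ((g.comp φ).comp (Fmap f)) = (Fmap g).comp ((e M N φ).comp f) := by
  refine ⟨fun M _ _ _ _ N _ _ _ _ => FObj.homEquiv.trans (FObj.coinduceEquiv hbasis).symm, ?_⟩
  intro M M' N N' _ _ _ _ _ _ _ _ _ _ _ _ _ _ _ _ f g φ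
  rw [Equiv.trans_apply, Equiv.trans_apply, Equiv.symm_apply_eq, FObj.coinduceEquiv_naturality,
    Equiv.apply_symm_apply]
  exact FObj.homEquiv_naturality f g φ

end
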